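/- arXiv:1407.5525 — 2 statements merged into one kernel-verified Lean document; each statement's English description precedes it below -/
import Mathlib

section
/- For every integer d ≥ 2, the set 𝒮'_d is convex: if A, B ∈ 𝒮'_d and t ∈ [0,1], then tA + (1−t)B ∈ 𝒮'_d. In particular, a convex combination of two rank-(d−1) positive semidefinite symmetric matrices with zero row sums and nonpositive off-diagonal entries again has rank d−1. (Convexity assertion of Corollary 1.) -/
open Matrix

/-- The set `𝒮'_d`: rank `d-1`, symmetric, positive semidefinite, zero row sums,
nonpositive off-diagonal entries. -/
def GraphLaplacianSet' (d : ℕ) : Set (Matrix (Fin d) (Fin d) ℝ) :=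
  {A | A.rank = d - 1 ∧ A.IsSymm ∧ A.PosSemidef ∧ (∀ i, ∑ j, A i j = 0) ∧
    ∀ i j, i ≠ j → A i j ≤ 0}

/-!
A convex combination `C = a A + b B` of two matrices of `𝒮'_d` inherits every linear condition
and positive semidefiniteness. For the rank, say `a > 0`: if `C x = 0` then
`0 = x⬝C x = a x⬝A x + b x⬝B x` is a sum of nonnegative terms, so `A x = 0`. Hence
`ker C ⊆ ker A`, which gives `rank C ≥ rank A = d - 1`, while the all-ones vector lies in
`ker C` because the row sums vanish, so `rank C ≤ d - 1`.
-/

namespace Matrix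

section Rank

variable {m n K : Type*} [Fintype n] [Field K]

theorem rank_le_rank_of_ker_le {A B : Matrix m n K}
    (h : LinearMap.ker B.mulVecLin ≤ LinearMap.ker A.mulVecLin) : A.rank ≤ B.rank := by
  have hA := LinearMap.finrank_range_add_finrank_ker A.mulVecLin
  have hB := LinearMap.finrank_range_add_finrank_ker B.mulVecLin
  have hker := Submodule.finrank_mono h
  unfold rank
  omega

theorem rank_le_card_sub_one_of_mulVec_eq_zero {A : Matrix m n K} {v : n → K} (hv : v ≠ 0)
    (h : A *ᵥ v = 0) : A.rank ≤ Fintype.card n - 1 := by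
  have hker : 0 < Module.finrank K (LinearMap.ker A.mulVecLin) :=
    Module.finrank_pos_iff_exists_ne_zero.2 ⟨⟨v, h⟩, fun h0 => hv (congrArg Subtype.val h0)⟩
  have hsum := LinearMap.finrank_range_add_finrank_ker A.mulVecLin
  rw [Module.finrank_fintype_fun_eq_card] at hsum
  unfold rank
  omega

end Rank

section PosSemidef

variable {n 𝕜 : Type*} [Fintype n] [RCLike 𝕜]

open scoped ComplexOrder

theorem PosSemidef.ker_add_le_left {A B : Matrix n n 𝕜} (hA : A.PosSemidef)
    (hB : B.PosSemidef) : LinearMap.ker (A + B).mulVecLin ≤ LinearMap.ker A.mulVecLin := by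
  intro x hx
  simp only [LinearMap.mem_ker, mulVecLin_apply] at hx ⊢
  have hq : star x ⬝ᵥ A *ᵥ x + star x ⬝ᵥ B *ᵥ x = 0 := by
    rw [← dotProduct_add, ← add_mulVec, hx, dotProduct_zero]
  have hAx := (add_eq_zero_iff_of_nonneg (hA.dotProduct_mulVec_nonneg x)
    (hB.dotProduct_mulVec_nonneg x)).1 hq |>.1
  exact (hA.dotProduct_mulVec_zero_iff x).1 hAx

theorem PosSemidef.rank_le_rank_add {A B : Matrix n n 𝕜} (hA : A.PosSemidef)
    (hB : B.PosSemidef) : A.rank ≤ (A + B).rank :=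
  rank_le_rank_of_ker_le (hA.ker_add_le_left hB)

end PosSemidef

end Matrix

theorem convex_graphLaplacianSet' (d : ℕ) [NeZero d] : Convex ℝ (GraphLaplacianSet' d) := by
  rintro A ⟨hAr, hAs, hAp, hArow, hAoff⟩ B ⟨hBr, hBs, hBp, hBrow, hBoff⟩ a b ha hb hab
  have hrow : ∀ i, ∑ j, (a • A + b • B) i j = 0 := fun i => by
    simp [Finset.sum_add_distrib, ← Finset.mul_sum, hArow, hBrow]
  have hones : (a • A + b • B) *ᵥ 1 = 0 := by
    ext i
    simpa [mulVec, dotProduct] using hrow i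
  have hrank_ge : d - 1 ≤ (a • A + b • B).rank := by
    rcases ha.lt_or_eq with ha | rfl
    · calc d - 1 = (a • A).rank := by
            rw [rank_smul_of_mem_nonZeroDivisors _ (by simpa using ha.ne'), hAr]
        _ ≤ _ := (hAp.smul ha.le).rank_le_rank_add (hBp.smul hb)
    · obtain rfl : b = 1 := by simpa using hab
      simp [hBr]
  refine ⟨le_antisymm ?_ hrank_ge, (hAs.smul a).add (hBs.smul b),
    (hAp.smul ha).add (hBp.smul hb), hrow, fun i j hij => ?_⟩
  · simpa using rank_le_card_sub_one_of_mulVec_eq_zero one_ne_zero hones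
  · simp only [Matrix.add_apply, Matrix.smul_apply, smul_eq_mul]
    exact add_nonpos (mul_nonpos_of_nonneg_of_nonpos ha (hAoff i j hij))
      (mul_nonpos_of_nonneg_of_nonpos hb (hBoff i j hij))

/-- Convexity assertion of Corollary 1: `𝒮'_d` is convex; in particular a convex
combination of two of its elements again has rank `d-1`. -/
theorem graphLaplacianSet'_convex (d : ℕ) (hd : 2 ≤ d)
    (A B : Matrix (Fin d) (Fin d) ℝ)
    (hA : A ∈ GraphLaplacianSet' d) (hB : B ∈ GraphLaplacianSet' d)
    (t : ℝ) (ht : t ∈ Set.Icc (0 : ℝ) 1) :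
    t • A + (1 - t) • B ∈ GraphLaplacianSet' d ∧
      (t • A + (1 - t) • B).rank = d - 1 := by
  have : NeZero d := ⟨by omega⟩
  have hC := convex_graphLaplacianSet' d hA hB ht.1 (sub_nonneg.2 ht.2) (add_sub_cancel t 1)
  exact ⟨hC, hC.1⟩
end

section
/- Let d ≥ 2 and let A be a symmetric d×d real matrix with rank(A) = d−1 whose rows each sum to 0. Then for every index i, the (d−1)×(d−1) matrix obtained from A by deleting its i-th row and i-th column is invertible. (Nonsingular-block claim from the proofs of Theorems 1 and 2.) -/
/-!
A kernel vector `x` of the principal submatrix, extended by `0` at `i`, gives a vector `y` with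
`(A y)_j = 0` for `j ≠ i`. Since the columns of `A` sum to zero (symmetry), the entries of `A y`
sum to zero, so `A y = 0` as well. The rank condition makes the kernel of `A` the line spanned by
the all-ones vector, and `y_i = 0` then forces `y = 0`, i.e. `x = 0`.
-/

open Matrix

/-- The embedding `Fin (d-1) → Fin d` skipping the index `i`. -/
def skipIdx {d : ℕ} (i : Fin d) (j : Fin (d - 1)) : Fin d :=
  if (j : ℕ) < (i : ℕ) then ⟨j, by omega⟩ else ⟨(j : ℕ) + 1, by omega⟩

theorem skipIdx_eq_succAbove {n : ℕ} (i : Fin (n + 1)) (j : Fin n) :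
    skipIdx i j = i.succAbove j := by
  ext
  simp only [skipIdx, Fin.succAbove, Fin.lt_def, Fin.val_castSucc]
  split_ifs <;> rfl

namespace Matrix

theorem mulVec_eq_zero_of_forall_ne {n R : Type*} [Fintype n] [CommRing R]
    {A : Matrix n n R} (hcol : 1 ᵥ* A = 0) {x : n → R} (i : n)
    (hx : ∀ j ≠ i, (A *ᵥ x) j = 0) : A *ᵥ x = 0 := by
  have hsum : ∑ j, (A *ᵥ x) j = 0 := by
    rw [← one_dotProduct, dotProduct_mulVec, hcol, zero_dotProduct]
  rw [Fintype.sum_eq_single i hx] at hsum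
  funext j
  by_cases hj : j = i
  · rw [hj, hsum, Pi.zero_apply]
  · exact hx j hj

theorem ker_mulVecLin_eq_span_singleton {n K : Type*} [Fintype n] [Field K]
    {A : Matrix n n K} {v : n → K} (hv : v ≠ 0) (hAv : A *ᵥ v = 0)
    (hrank : A.rank + 1 = Fintype.card n) :
    LinearMap.ker A.mulVecLin = Submodule.span K {v} := by
  have hker : Module.finrank K (LinearMap.ker A.mulVecLin) = 1 := by
    have := LinearMap.finrank_range_add_finrank_ker A.mulVecLin
    rw [Module.finrank_fintype_fun_eq_card] at this
    change A.rank + _ = _ at this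
    omega
  refine (Submodule.eq_of_le_of_finrank_eq ?_ ?_).symm
  · rwa [Submodule.span_singleton_le_iff_mem, LinearMap.mem_ker]
  · rw [finrank_span_singleton hv, hker]

theorem mulVec_insertNth_zero_succAbove {n : ℕ} {R : Type*} [CommRing R]
    (A : Matrix (Fin (n + 1)) (Fin (n + 1)) R) (i : Fin (n + 1)) (x : Fin n → R) (j : Fin n) :
    (A *ᵥ Fin.insertNth i 0 x) (i.succAbove j) = (A.submatrix i.succAbove i.succAbove *ᵥ x) j := by
  simp [mulVec, dotProduct, Fin.sum_univ_succAbove _ i]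

theorem isUnit_submatrix_succAbove {n : ℕ} {K : Type*} [Field K]
    {A : Matrix (Fin (n + 1)) (Fin (n + 1)) K} (hcol : 1 ᵥ* A = 0) {v : Fin (n + 1) → K}
    (hker : LinearMap.ker A.mulVecLin = Submodule.span K {v}) (i : Fin (n + 1)) (hvi : v i ≠ 0) :
    IsUnit (A.submatrix i.succAbove i.succAbove) := by
  rw [isUnit_iff_isUnit_det, isUnit_iff_ne_zero, Ne, ← exists_mulVec_eq_zero_iff]
  rintro ⟨x, hx0, hx⟩
  set y : Fin (n + 1) → K := Fin.insertNth i 0 x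
  have hy : y ∈ LinearMap.ker A.mulVecLin := by
    refine mulVec_eq_zero_of_forall_ne hcol i fun j hj => ?_
    obtain ⟨k, rfl⟩ := Fin.exists_succAbove_eq hj
    rw [mulVec_insertNth_zero_succAbove, hx, Pi.zero_apply]
  rw [hker, Submodule.mem_span_singleton] at hy
  obtain ⟨t, ht⟩ := hy
  have htv : t * v i = 0 := by
    simpa [y] using congrFun ht i
  have ht0 : t = 0 := (mul_eq_zero.mp htv).resolve_right hvi
  apply hx0
  funext k
  simpa [ht0, y] using (congrFun ht (i.succAbove k)).symm

end Matrix

theorem principalSubmatrix_isUnit_general (d : ℕ)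
    (A : Matrix (Fin d) (Fin d) ℝ) (hsym : A.IsSymm)
    (hrank : A.rank = d - 1) (hrow : ∀ i, ∑ j, A i j = 0) (i : Fin d) :
    IsUnit (A.submatrix (skipIdx i) (skipIdx i)) := by
  obtain ⟨n, rfl⟩ : ∃ n, d = n + 1 := Nat.exists_eq_add_one_of_ne_zero i.pos.ne'
  have hones : A *ᵥ 1 = 0 := funext fun k => by simpa [mulVec, dotProduct] using hrow k
  have hcol : 1 ᵥ* A = 0 := by rw [← hsym.eq, vecMul_transpose, hones]
  have hker := ker_mulVecLin_eq_span_singleton one_ne_zero hones (by simp [hrank])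
  have hsub : skipIdx i = i.succAbove := funext (skipIdx_eq_succAbove i)
  rw [hsub]
  exact isUnit_submatrix_succAbove hcol hker i one_ne_zero

/-- Nonsingular-block claim from the proofs of Theorems 1 and 2: if `A` is a
symmetric `d × d` real matrix of rank `d-1` with zero row sums, then the
`(d-1) × (d-1)` matrix obtained by deleting the `i`-th row and column of `A`
is invertible, for every `i`. -/
theorem principalSubmatrix_isUnit (d : ℕ) (hd : 2 ≤ d)
    (A : Matrix (Fin d) (Fin d) ℝ) (hsym : A.IsSymm)
    (hrank : A.rank = d - 1) (hrow : ∀ i, ∑ j, A i j = 0) (i : Fin d) :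
    IsUnit (A.submatrix (skipIdx i) (skipIdx i)) :=
  principalSubmatrix_isUnit_general d A hsym hrank hrow i
end
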